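/- arXiv:1912.10175 — 7 statements merged into one kernel-verified Lean document; each statement's English description precedes it below -/
import Mathlib

section
/- Let (sₙ) be a sequence of nonnegative reals bounded by a positive natural number d, and suppose s_{n+1} ≤ (1−αₙ)sₙ + αₙ rₙ + γₙ for all n, where (αₙ) ⊂ [0,1], (γₙ) ⊂ [0,∞), and (rₙ) are real sequences. Assume there exist functions A, R, G : ℕ → ℕ such that (i) Σ_{i=1}^{A(k)} αᵢ ≥ k for all k; (ii) rₙ ≤ 1/(k+1) for all n ≥ R(k); (iii) Σ_{i=G(k)+1}^{G(k)+n} γᵢ ≤ 1/(k+1) for all k, n. Then for all k and all n ≥ θ(k) := A(N−1+⌈ln(3d(k+1))⌉)+1, where N := max{R(3k+2), G(3k+2)+1}, we have sₙ ≤ 1/(k+1). -/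
/-!
From the index `N` on, `rₙ` and the tail sums of `γ` are at most `ε = 1/(3(k+1))`, so unrolling
the recursion gives `sₙ ≤ P s_N + (1 - P) ε + ε` with `P = ∏_{N ≤ i < n} (1 - αᵢ) ≤ exp (-∑ αᵢ)`.
By (i) the weights `αᵢ` with `N ≤ i < n` already sum to at least `⌈ln(3d(k+1))⌉` (the earlier ones
contribute at most `N - 1`), so `P d ≤ ε` and `sₙ ≤ 3ε`.
-/

open Finset Real

theorem prod_one_sub_le_exp_neg_sum {ι : Type*} (t : Finset ι) {α : ι → ℝ}
    (hα : ∀ i ∈ t, α i ≤ 1) : ∏ i ∈ t, (1 - α i) ≤ exp (-∑ i ∈ t, α i) := by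
  rw [← sum_neg_distrib, exp_sum]
  exact prod_le_prod (fun i hi => by linarith [hα i hi]) fun i _ => one_sub_le_exp_neg (α i)

theorem prod_one_sub_le_inv_of_log_le_sum {ι : Type*} (t : Finset ι) {α : ι → ℝ}
    (hα : ∀ i ∈ t, α i ≤ 1) {x : ℝ} (hx : 0 < x) (hsum : log x ≤ ∑ i ∈ t, α i) :
    ∏ i ∈ t, (1 - α i) ≤ x⁻¹ := by
  calc ∏ i ∈ t, (1 - α i) ≤ exp (-∑ i ∈ t, α i) := prod_one_sub_le_exp_neg_sum t hα
    _ ≤ exp (-log x) := exp_le_exp.2 (neg_le_neg hsum)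
    _ = x⁻¹ := by rw [exp_neg, exp_log hx]

section Recursion

variable {s α r γ : ℕ → ℝ}

theorem le_prod_one_sub_mul_add_of_step_le (hα : ∀ n, α n ∈ Set.Icc (0 : ℝ) 1)
    (hγ : ∀ n, 0 ≤ γ n) (hrec : ∀ n, s (n + 1) ≤ (1 - α n) * s n + α n * r n + γ n)
    {m : ℕ} {c : ℝ} (hr : ∀ n ≥ m, r n ≤ c) :
    ∀ n ≥ m, s n ≤ (∏ i ∈ Ico m n, (1 - α i)) * s m + (1 - ∏ i ∈ Ico m n, (1 - α i)) * c
      + ∑ i ∈ Ico m n, γ i := by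
  intro n hmn
  induction n, hmn using Nat.le_induction with
  | base => simp
  | succ n hmn ih =>
    obtain ⟨hα0, hα1⟩ := hα n
    have hS : 0 ≤ ∑ i ∈ Ico m n, γ i := sum_nonneg fun i _ => hγ i
    rw [prod_Ico_succ_top hmn, sum_Ico_succ_top hmn]
    nlinarith [mul_le_mul_of_nonneg_left ih (sub_nonneg.2 hα1),
      mul_le_mul_of_nonneg_left (hr n hmn) hα0, mul_nonneg hα0 hS, hrec n]

theorem sum_Icc_one_le_add_sum_Ico (hα : ∀ n, α n ∈ Set.Icc (0 : ℝ) 1) {M n : ℕ} (hMn : M < n)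
    (N : ℕ) : ∑ i ∈ Icc 1 M, α i ≤ ((N - 1 : ℕ) : ℝ) + ∑ i ∈ Ico N n, α i := by
  have hsplit : Icc 1 M ⊆ Ico 1 N ∪ Ico N n := by
    intro i
    simp only [mem_Icc, mem_union, mem_Ico]
    omega
  calc ∑ i ∈ Icc 1 M, α i ≤ ∑ i ∈ Ico 1 N ∪ Ico N n, α i :=
        sum_le_sum_of_subset_of_nonneg hsplit fun i _ _ => (hα i).1
    _ = ∑ i ∈ Ico 1 N, α i + ∑ i ∈ Ico N n, α i :=
        sum_union (disjoint_left.2 fun i hi hi' => by simp only [mem_Ico] at hi hi'; omega)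
    _ ≤ ∑ _i ∈ Ico 1 N, (1 : ℝ) + ∑ i ∈ Ico N n, α i := by
        gcongr with i; exact (hα i).2
    _ = ((N - 1 : ℕ) : ℝ) + ∑ i ∈ Ico N n, α i := by simp

theorem sum_Ico_le_of_forall_sum_Icc_le (hγ : ∀ n, 0 ≤ γ n) {g N : ℕ} {ε : ℝ}
    (hg : ∀ n, ∑ i ∈ Icc (g + 1) (g + n), γ i ≤ ε) (hN : g + 1 ≤ N) (n : ℕ) :
    ∑ i ∈ Ico N n, γ i ≤ ε := by
  have hsub : Ico N n ⊆ Icc (g + 1) (g + (n - 1 - g)) := by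
    intro i
    simp only [mem_Ico, mem_Icc]
    omega
  exact (sum_le_sum_of_subset_of_nonneg hsub fun i _ _ => hγ i).trans (hg _)

end Recursion

theorem stmt3_general (s α r γ : ℕ → ℝ) (d : ℕ) (hd : 0 < d)
    (hsd : ∀ n, s n ≤ d)
    (hα : ∀ n, α n ∈ Set.Icc (0 : ℝ) 1) (hγ : ∀ n, 0 ≤ γ n)
    (hrec : ∀ n, s (n + 1) ≤ (1 - α n) * s n + α n * r n + γ n)
    (A R G : ℕ → ℕ)
    (hA : ∀ k : ℕ, (k : ℝ) ≤ ∑ i ∈ Finset.Icc 1 (A k), α i)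
    (hR : ∀ k : ℕ, ∀ n ≥ R k, r n ≤ 1 / (k + 1))
    (hG : ∀ k n : ℕ, ∑ i ∈ Finset.Icc (G k + 1) (G k + n), γ i ≤ 1 / (k + 1)) :
    ∀ k : ℕ, ∀ n ≥ A (max (R (3 * k + 2)) (G (3 * k + 2) + 1) - 1 +
        ⌈Real.log (3 * d * (k + 1))⌉₊) + 1,
      s n ≤ 1 / (k + 1) := by
  intro k n hn
  set N := max (R (3 * k + 2)) (G (3 * k + 2) + 1)
  set x : ℝ := 3 * d * (k + 1)
  have hx : 1 < x := by
    have : (1 : ℝ) ≤ d := by exact_mod_cast hd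
    nlinarith [(k.cast_nonneg : (0 : ℝ) ≤ k)]
  have hε : 1 / (((3 * k + 2 : ℕ) : ℝ) + 1) = 1 / (3 * (k + 1)) := by push_cast; ring_nf
  have hlog : log x ≤ ∑ i ∈ Ico N n, α i := by
    have := (hA _).trans (sum_Icc_one_le_add_sum_Ico hα (Nat.lt_of_succ_le hn) N)
    push_cast at this
    linarith [Nat.le_ceil (log x)]
  have hNn : N ≤ n := by
    by_contra! h
    rw [Ico_eq_empty_of_le h.le, sum_empty] at hlog
    linarith [log_pos hx]
  have hsn := le_prod_one_sub_mul_add_of_step_le hα hγ hrec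
    (fun i hi => hε ▸ hR _ i ((le_max_left _ _).trans hi)) n hNn
  have htail := sum_Ico_le_of_forall_sum_Icc_le hγ (hG (3 * k + 2)) (N := N) (le_max_right _ _) n
  set P := ∏ i ∈ Ico N n, (1 - α i)
  have hP0 : 0 ≤ P := prod_nonneg fun i _ => sub_nonneg.2 (hα i).2
  have hPd : P * d ≤ 1 / (3 * (k + 1)) := by
    calc P * d ≤ x⁻¹ * d := by
          gcongr
          exact prod_one_sub_le_inv_of_log_le_sum _ (fun i _ => (hα i).2) (by linarith) hlog
      _ = 1 / (3 * (k + 1)) := by field_simp [x]; ring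
  rw [hε] at htail
  have hε0 : (0 : ℝ) ≤ 1 / (3 * (k + 1)) := by positivity
  have h3ε : 3 * (1 / (3 * ((k : ℝ) + 1))) = 1 / (k + 1) := by field_simp
  nlinarith [mul_le_mul_of_nonneg_left (hsd N) hP0, mul_nonneg hP0 hε0]

theorem stmt3 (s α r γ : ℕ → ℝ) (d : ℕ) (hd : 0 < d)
    (hs : ∀ n, 0 ≤ s n) (hsd : ∀ n, s n ≤ d)
    (hα : ∀ n, α n ∈ Set.Icc (0 : ℝ) 1) (hγ : ∀ n, 0 ≤ γ n)
    (hrec : ∀ n, s (n + 1) ≤ (1 - α n) * s n + α n * r n + γ n)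
    (A R G : ℕ → ℕ)
    (hA : ∀ k : ℕ, (k : ℝ) ≤ ∑ i ∈ Finset.Icc 1 (A k), α i)
    (hR : ∀ k : ℕ, ∀ n ≥ R k, r n ≤ 1 / (k + 1))
    (hG : ∀ k n : ℕ, ∑ i ∈ Finset.Icc (G k + 1) (G k + n), γ i ≤ 1 / (k + 1)) :
    ∀ k : ℕ, ∀ n ≥ A (max (R (3 * k + 2)) (G (3 * k + 2) + 1) - 1 +
        ⌈Real.log (3 * d * (k + 1))⌉₊) + 1,
      s n ≤ 1 / (k + 1) :=
  stmt3_general s α r γ d hd hsd hα hγ hrec A R G hA hR hG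
end

section
/- Let s : ℕ → ℝ, m ∈ ℕ with s_m < s_{m+1}, and define τ_m(n) := max{k ∈ [m,n] : s_k < s_{k+1}} for n ≥ m (this set is nonempty since s_m < s_{m+1}). Then for every i ≥ m, max{s_{τ_m(i)}, s_i} ≤ s_{τ_m(i)+1}. -/
open Classical in
noncomputable def tau (s : ℕ → ℝ) (m n : ℕ) : ℕ :=
  if h : ∃ k ∈ Finset.Icc m n, s k < s (k + 1) then
    (((Finset.Icc m n).filter fun k => s k < s (k + 1)).max'
      (by obtain ⟨k, hk, hsk⟩ := h; exact ⟨k, Finset.mem_filter.mpr ⟨hk, hsk⟩⟩))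
  else n


theorem stmt8 (s : ℕ → ℝ) (m : ℕ) (hm : s m < s (m + 1)) :
    ∀ i ≥ m, max (s (tau s m i)) (s i) ≤ s (tau s m i + 1) := by
  intro i hi
  have h : ∃ k ∈ Finset.Icc m i, s k < s (k + 1) :=
    ⟨m, Finset.mem_Icc.mpr ⟨le_refl m, hi⟩, hm⟩
  have htau : tau s m i =
      (((Finset.Icc m i).filter fun k => s k < s (k + 1)).max'
        (by obtain ⟨k, hk, hsk⟩ := h; exact ⟨k, Finset.mem_filter.mpr ⟨hk, hsk⟩⟩)) := by
    rw [tau, dif_pos h]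
  set t := tau s m i with ht
  have hmem : t ∈ (Finset.Icc m i).filter fun k => s k < s (k + 1) := by
    rw [htau]; exact Finset.max'_mem _ _
  have hmem' := Finset.mem_filter.mp hmem
  obtain ⟨hIcc, hst⟩ := hmem'
  obtain ⟨hmt, hti⟩ := Finset.mem_Icc.mp hIcc
  have hmax : ∀ k, m ≤ k → k ≤ i → s k < s (k + 1) → k ≤ t := by
    intro k h1 h2 h3
    rw [htau]
    exact Finset.le_max' _ k (Finset.mem_filter.mpr ⟨Finset.mem_Icc.mpr ⟨h1, h2⟩, h3⟩)
  have key : ∀ j, t + 1 ≤ j → j ≤ i → s j ≤ s (t + 1) := by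
    intro j
    induction j with
    | zero => omega
    | succ n ih =>
      intro h1 h2
      rcases eq_or_lt_of_le h1 with heq | hlt
      · rw [← heq]
      · have hn1 : t + 1 ≤ n := by omega
        have hn2 : n ≤ i := by omega
        have : ¬ s n < s (n + 1) := by
          intro hc
          have := hmax n (by omega) hn2 hc
          omega
        exact le_trans (not_lt.mp this) (ih hn1 hn2)
  have hsi : s i ≤ s (t + 1) := by
    rcases eq_or_lt_of_le hti with heq | hlt
    · rw [← heq]; exact le_of_lt hst
    · exact key i (by omega) le_rfl
  exact max_le (le_of_lt hst) hsi
end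

section
/- Let T : H → H be firmly nonexpansive (i.e. ‖T(x)−T(y)‖² ≤ ‖x−y‖² − ‖(x−T(x))−(y−T(y))‖² for all x,y). Then for all x, z ∈ H: ‖T(x) − z‖² ≤ ‖x − z‖² − ‖T(x) − x‖² + 2‖T(z) − z‖·(3‖x − z‖ + ‖T(z) − z‖). -/
theorem stmt10 {H : Type*} [NormedAddCommGroup H] [InnerProductSpace ℝ H]
    (T : H → H)
    (hT : ∀ x y : H, ‖T x - T y‖ ^ 2 ≤ ‖x - y‖ ^ 2 - ‖(x - T x) - (y - T y)‖ ^ 2)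
    (x z : H) :
    ‖T x - z‖ ^ 2 ≤ ‖x - z‖ ^ 2 - ‖T x - x‖ ^ 2 +
      2 * ‖T z - z‖ * (3 * ‖x - z‖ + ‖T z - z‖) := by
  have h1 := hT x z
  have h2 := norm_add_sq_real (T x - T z) (T z - z)
  rw [sub_add_sub_cancel] at h2
  have h3 := norm_add_sq_real (x - T x) (T z - z)
  have heq : (x - T x) + (T z - z) = (x - T x) - (z - T z) := by abel
  rw [heq] at h3
  have i1 := abs_real_inner_le_norm (T x - T z) (T z - z)
  have i2 := abs_real_inner_le_norm (x - T x) (T z - z)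
  rw [abs_le] at i1 i2
  have hsq : ‖(x - T x) - (z - T z)‖ ^ 2 ≥ 0 := sq_nonneg _
  have hne : ‖T x - T z‖ ≤ ‖x - z‖ := by
    have : ‖T x - T z‖ ^ 2 ≤ ‖x - z‖ ^ 2 := by linarith
    exact (pow_le_pow_iff_left₀ (norm_nonneg _) (norm_nonneg _) two_ne_zero).mp this
  have htri : ‖x - T x‖ ≤ ‖x - z‖ + ‖T z - z‖ + ‖T x - T z‖ := by
    calc ‖x - T x‖ = ‖(x - z) + (z - T z) + (T z - T x)‖ := by congr 1; abel
    _ ≤ ‖(x - z) + (z - T z)‖ + ‖T z - T x‖ := norm_add_le _ _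
    _ ≤ ‖x - z‖ + ‖z - T z‖ + ‖T z - T x‖ := by
        have := norm_add_le (x - z) (z - T z); linarith
    _ = ‖x - z‖ + ‖T z - z‖ + ‖T x - T z‖ := by rw [norm_sub_rev (T z) (T x), norm_sub_rev z (T z)]
  have hrev : ‖T x - x‖ = ‖x - T x‖ := norm_sub_rev _ _
  rw [hrev]
  nlinarith [mul_le_mul_of_nonneg_left htri (norm_nonneg (T z - z)),
    mul_le_mul_of_nonneg_left hne (norm_nonneg (T z - z)),
    norm_nonneg (T z - z), norm_nonneg (x - z), norm_nonneg (x - T x), norm_nonneg (T x - T z)]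
end

section
/- Let (zₙ), (yₙ) be as in the inexact and exact iterations z_{n+1} = λₙ u + γₙ zₙ + δₙ Tₙ(zₙ) + eₙ, y_{n+1} = λₙ u + γₙ yₙ + δₙ Tₙ(yₙ), z₀ = y₀, with Tₙ nonexpansive, λₙ + γₙ + δₙ = 1, λₙ ∈ (0,1). Suppose E : ℕ → ℕ is monotone and satisfies ‖eₙ‖ ≤ λₙ/(k+1) for all n ≥ E(k) and all k, and d₂ ∈ ℕ \ {0} satisfies d₂ ≥ max{‖zᵢ − yᵢ‖ : i ≤ E(0)}. Then ‖zₙ − yₙ‖ ≤ d₂ for all n ∈ ℕ. -/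
theorem stmt13 {H : Type*} [NormedAddCommGroup H] [InnerProductSpace ℝ H]
    (u : H) (z y e : ℕ → H) (T : ℕ → H → H) (lam gam del : ℕ → ℝ)
    (hT : ∀ n, ∀ a b : H, ‖T n a - T n b‖ ≤ ‖a - b‖)
    (hlam : ∀ n, lam n ∈ Set.Ioo (0 : ℝ) 1)
    (hdel : ∀ n, del n ∈ Set.Ioo (0 : ℝ) 1)
    (hgam : ∀ n, gam n ∈ Set.Ico (0 : ℝ) 1)
    (hsum : ∀ n, lam n + gam n + del n = 1)
    (h0 : z 0 = y 0)
    (hz : ∀ n, z (n + 1) = lam n • u + gam n • z n + del n • T n (z n) + e n)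
    (hy : ∀ n, y (n + 1) = lam n • u + gam n • y n + del n • T n (y n))
    (E : ℕ → ℕ) (hE : Monotone E)
    (he : ∀ k : ℕ, ∀ n ≥ E k, ‖e n‖ ≤ lam n / (k + 1))
    (d₂ : ℕ) (hd₂ : 0 < d₂)
    (hd : ∀ i ≤ E 0, ‖z i - y i‖ ≤ d₂) :
    ∀ n, ‖z n - y n‖ ≤ d₂ := by
  intro n
  induction n with
  | zero => exact hd 0 (Nat.zero_le _)
  | succ n ih =>
    by_cases hn : n + 1 ≤ E 0
    · exact hd _ hn
    · have hn' : E 0 ≤ n := by omega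
      have hen : ‖e n‖ ≤ lam n := by simpa using he 0 n hn'
      have key : z (n+1) - y (n+1) =
          gam n • (z n - y n) + del n • (T n (z n) - T n (y n)) + e n := by
        rw [hz, hy]; module
      have h1 : (1:ℝ) ≤ (d₂:ℝ) := by exact_mod_cast hd₂
      have hnn : (0:ℝ) ≤ ‖z n - y n‖ := norm_nonneg _
      calc ‖z (n+1) - y (n+1)‖
          ≤ ‖gam n • (z n - y n)‖ + ‖del n • (T n (z n) - T n (y n))‖ + ‖e n‖ := by
            rw [key]; exact norm_add₃_le
        _ = gam n * ‖z n - y n‖ + del n * ‖T n (z n) - T n (y n)‖ + ‖e n‖ := by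
            rw [norm_smul, norm_smul, Real.norm_eq_abs, Real.norm_eq_abs,
              abs_of_nonneg (hgam n).1, abs_of_nonneg (hdel n).1.le]
        _ ≤ gam n * ‖z n - y n‖ + del n * ‖z n - y n‖ + lam n := by
            gcongr
            · exact (hdel n).1.le
            · exact hT n _ _
        _ ≤ (d₂:ℝ) := by nlinarith [hsum n, (hlam n).1, (hlam n).2, (hgam n).1, (hdel n).1.le, ih]
end

section
/- Let c ∈ ℕ \ {0}, let (cₙ) ⊂ (0,∞) with cₙ ≥ 1/c for all n, and let 𝖢 : ℕ → ℕ be monotone with cₙ ≤ 𝖢(n) for all n. Let (Jₐ) be the resolvents of a maximal monotone operator on a Hilbert space H, write J := J_{1/c} and Jₙ := J_{cₙ}. Then for all k, n ∈ ℕ and z ∈ H: if ‖J(z) − z‖ ≤ 1/(c(k+1)𝖢(n)), then for all n' ≤ n, ‖J_{n'}(z) − z‖ ≤ 1/(k+1). -/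
theorem stmt15 {H : Type*} [NormedAddCommGroup H] [InnerProductSpace ℝ H]
    (J : ℝ → H → H)
    (hid : ∀ a b : ℝ, 0 < a → 0 < b → ∀ x : H,
      J a x = J b ((b / a) • x + (1 - b / a) • J a x))
    (hne : ∀ b : ℝ, 0 < b → ∀ x y : H, ‖J b x - J b y‖ ≤ ‖x - y‖)
    (c : ℕ) (hc : 0 < c) (cseq : ℕ → ℝ) (hcs : ∀ n, 0 < cseq n)
    (hcsc : ∀ n, 1 / (c : ℝ) ≤ cseq n)
    (C : ℕ → ℕ) (hC : Monotone C) (hcC : ∀ n, cseq n ≤ C n) :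
    ∀ k n : ℕ, ∀ z : H,
      ‖J (1 / (c : ℝ)) z - z‖ ≤ 1 / (c * (k + 1) * C n) →
      ∀ n' ≤ n, ‖J (cseq n') z - z‖ ≤ 1 / (k + 1) := by
  intro k n z hz n' hn'
  have hcR : (0:ℝ) < c := by exact_mod_cast hc
  set a : ℝ := 1 / (c:ℝ) with ha_def
  have ha : 0 < a := by positivity
  set b : ℝ := cseq n' with hb_def
  have hb : 0 < b := hcs n'
  have hab : a ≤ b := hcsc n'
  have hCn1 : (1:ℝ) ≤ C n := by
    have h1 : cseq n ≤ C n := hcC n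
    have := hcs n
    have : (0:ℝ) < C n := lt_of_lt_of_le this h1
    exact_mod_cast Nat.one_le_iff_ne_zero.mpr (by exact_mod_cast this.ne')
  have hCn : (0:ℝ) < C n := lt_of_lt_of_le one_pos hCn1
  -- key: ‖J b z - z‖ ≤ (b/a) * ‖J a z - z‖
  have key : ‖J b z - z‖ ≤ (b / a) * ‖J a z - z‖ := by
    have hw := hid a b ha hb z
    set w : H := (b / a) • z + (1 - b / a) • J a z with hw_def
    have h1 : ‖J b z - J a z‖ ≤ ‖z - w‖ := by
      rw [hw]; exact hne b hb z w
    have h2 : z - w = (1 - b / a) • (z - J a z) := by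
      rw [hw_def]; module
    have h3 : ‖z - w‖ = (b / a - 1) * ‖J a z - z‖ := by
      rw [h2, norm_smul, Real.norm_eq_abs, abs_of_nonpos (by
        have : (1:ℝ) ≤ b / a := (one_le_div ha).mpr hab
        linarith), norm_sub_rev]
      ring
    calc ‖J b z - z‖ ≤ ‖J b z - J a z‖ + ‖J a z - z‖ := norm_sub_le_norm_sub_add_norm_sub _ _ _
      _ ≤ (b / a - 1) * ‖J a z - z‖ + ‖J a z - z‖ := by
          have := h1.trans_eq h3; linarith
      _ = (b / a) * ‖J a z - z‖ := by ring
  have hba : b / a = b * c := by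
    rw [ha_def]; field_simp
  have hbC : b * c ≤ (c:ℝ) * C n := by
    have h1 : b ≤ (C n' : ℝ) := hcC n'
    have h2 : (C n' : ℝ) ≤ C n := by exact_mod_cast hC hn'
    nlinarith
  have hM : (b / a) * ‖J a z - z‖ ≤ ((c:ℝ) * C n) * (1 / (c * (k + 1) * C n)) := by
    have hnn : (0:ℝ) ≤ ‖J a z - z‖ := norm_nonneg _
    have h1 : (b / a) * ‖J a z - z‖ ≤ ((c:ℝ) * C n) * ‖J a z - z‖ := by
      rw [hba]; exact mul_le_mul_of_nonneg_right hbC hnn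
    have h2 : ((c:ℝ) * C n) * ‖J a z - z‖ ≤ ((c:ℝ) * C n) * (1 / (c * (k + 1) * C n)) :=
      mul_le_mul_of_nonneg_left hz (by positivity)
    linarith
  have heq : ((c:ℝ) * C n) * (1 / (c * (k + 1) * C n)) = 1 / (k + 1) := by
    field_simp
  calc ‖J b z - z‖ ≤ (b / a) * ‖J a z - z‖ := key
    _ ≤ ((c:ℝ) * C n) * (1 / (c * (k + 1) * C n)) := hM
    _ = 1 / (k + 1) := heq
end

section
/- Let H be a real Hilbert space, z ∈ H, (yₙ) ⊂ H a sequence with ‖yₙ − z‖ ≤ 2D for all n where D ∈ ℕ \ {0}, and set sₙ := ‖yₙ − z‖². Suppose for k, n ∈ ℕ and a monotone f : ℕ → ℕ that s_{i+1} ≤ s_i for all i ∈ [n, f(φ₂)] where φ₂ := max{n, f^{(4D²(k+1))}(n)} and f^{(j)} denotes j-fold iteration. Then there exists n' ≤ φ₂ such that |s_i − s_j| ≤ 1/(k+1) for all i, j ∈ [n', f(n')]; moreover n' can be chosen among {f^{(i)}(n) : i ≤ 4D²(k+1)}. -/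
theorem stmt16 {H : Type*} [NormedAddCommGroup H] [InnerProductSpace ℝ H]
    (z : H) (y : ℕ → H) (D : ℕ) (hD : 0 < D)
    (hyD : ∀ n, ‖y n - z‖ ≤ 2 * D)
    (k n : ℕ) (f : ℕ → ℕ) (hf : Monotone f)
    (hdec : ∀ i ∈ Finset.Icc n (f (max n (f^[4 * D ^ 2 * (k + 1)] n))),
      ‖y (i + 1) - z‖ ^ 2 ≤ ‖y i - z‖ ^ 2) :
    ∃ n' ≤ max n (f^[4 * D ^ 2 * (k + 1)] n),
      (∀ i ∈ Finset.Icc n' (f n'), ∀ j ∈ Finset.Icc n' (f n'),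
        |‖y i - z‖ ^ 2 - ‖y j - z‖ ^ 2| ≤ 1 / (k + 1)) ∧
      ∃ i ≤ 4 * D ^ 2 * (k + 1), n' = f^[i] n := by
  set N := 4 * D ^ 2 * (k + 1) with hN
  set φ := max n (f^[N] n) with hφ
  set s : ℕ → ℝ := fun i => ‖y i - z‖ ^ 2 with hs
  have hposk : (0:ℝ) < (k:ℝ) + 1 := by positivity
  have hs0 : ∀ i, 0 ≤ s i := fun i => by positivity
  have hsD : ∀ i, s i ≤ 4 * (D:ℝ) ^ 2 := by
    intro i
    have h1 := hyD i
    have h2 : (0:ℝ) ≤ ‖y i - z‖ := norm_nonneg _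
    have : ‖y i - z‖ ^ 2 ≤ (2 * (D:ℝ)) ^ 2 := by nlinarith
    calc s i ≤ (2 * (D:ℝ)) ^ 2 := this
      _ = 4 * (D:ℝ) ^ 2 := by ring
  have hmono : ∀ a b, n ≤ a → a ≤ b → b ≤ f φ + 1 → s b ≤ s a := by
    intro a b ha hab hb
    induction b with
    | zero => interval_cases a; exact le_refl _
    | succ b ih =>
      rcases Nat.lt_or_ge b (a) with h | h
      · have : a = b + 1 := le_antisymm hab h
        rw [this]
      · have hb' : b ≤ f φ := Nat.lt_succ_iff.mp hb
        have h1 : s (b+1) ≤ s b :=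
          hdec b (Finset.mem_Icc.mpr ⟨le_trans ha h, hb'⟩)
        have h2 : s b ≤ s a := ih h (le_trans hb' (Nat.le_succ _))
        linarith
  rcases Nat.lt_or_ge n (f n) with hfn | hfn
  swap
  · -- f n ≤ n : take n' = n
    refine ⟨n, le_max_left _ _, ?_, 0, Nat.zero_le _, rfl⟩
    intro i hi j hj
    simp only [Finset.mem_Icc] at hi hj
    have hi' : i = n := le_antisymm (le_trans hi.2 hfn) hi.1
    have hj' : j = n := le_antisymm (le_trans hj.2 hfn) hj.1
    rw [hi', hj', sub_self, abs_zero]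
    positivity
  · have hstep : ∀ j, f^[j] n ≤ f^[j+1] n := by
      intro j
      induction j with
      | zero => exact le_of_lt hfn
      | succ j ih =>
        rw [Function.iterate_succ_apply', Function.iterate_succ_apply']
        exact hf ih
    have hgm : Monotone (fun j => f^[j] n) := monotone_nat_of_le_succ hstep
    have hgφ : ∀ j, j ≤ N → f^[j] n ≤ φ := fun j hj =>
      le_trans (hgm hj) (le_max_right _ _)
    have hgn : ∀ j, n ≤ f^[j] n := fun j => hgm (Nat.zero_le j)
    have hN1 : 1 ≤ N := by
      have : 1 ≤ D ^ 2 := Nat.one_le_pow _ _ hD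
      calc 1 ≤ 4 * D ^ 2 * 1 := by omega
        _ ≤ N := by rw [hN]; exact Nat.mul_le_mul_left _ (by omega)
    have key : ∃ j < N, s (f^[j] n) - s (f^[j+1] n) ≤ 1 / ((k:ℝ) + 1) := by
      by_contra hcon
      push_neg at hcon
      have chain : ∀ j, 1 ≤ j → j ≤ N →
          (j:ℝ) / ((k:ℝ)+1) < s n - s (f^[j] n) := by
        intro j h1 h2
        induction j with
        | zero => omega
        | succ j ih =>
          rcases Nat.eq_or_lt_of_le h1 with h | h
          · have hj0 : j = 0 := by omega
            subst hj0
            have := hcon 0 (by omega)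
            simp only [Function.iterate_zero_apply, Function.iterate_one] at this ⊢
            push_cast
            rw [div_lt_iff₀ hposk] at this ⊢
            linarith
          · have hj1 : 1 ≤ j := by omega
            have hih := ih hj1 (by omega)
            have := hcon j (by omega)
            rw [div_lt_iff₀ hposk] at this hih ⊢
            push_cast
            linarith
      have hfin := chain N hN1 le_rfl
      have hNval : (N:ℝ) / ((k:ℝ)+1) = 4 * (D:ℝ)^2 := by
        rw [hN]
        push_cast
        field_simp
      rw [hNval] at hfin
      have := hs0 (f^[N] n)
      have := hsD n
      linarith
    obtain ⟨j, hjN, hjs⟩ := key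
    refine ⟨f^[j] n, hgφ j (le_of_lt hjN), ?_, j, le_of_lt hjN, rfl⟩
    intro i hi i' hi'
    simp only [Finset.mem_Icc] at hi hi'
    have hfj : f (f^[j] n) = f^[j+1] n := (Function.iterate_succ_apply' f j n).symm
    have hub : f^[j+1] n ≤ f φ + 1 := by
      have : f (f^[j] n) ≤ f φ := hf (hgφ j (le_of_lt hjN))
      omega
    have bi1 : s i ≤ s (f^[j] n) := hmono _ _ (hgn j) hi.1
      (le_trans (hfj ▸ hi.2) (le_trans le_rfl hub))
    have bi2 : s (f^[j+1] n) ≤ s i := hmono _ _ (le_trans (hgn j) hi.1)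
      (hfj ▸ hi.2) hub
    have bi1' : s i' ≤ s (f^[j] n) := hmono _ _ (hgn j) hi'.1
      (le_trans (hfj ▸ hi'.2) (le_trans le_rfl hub))
    have bi2' : s (f^[j+1] n) ≤ s i' := hmono _ _ (le_trans (hgn j) hi'.1)
      (hfj ▸ hi'.2) hub
    show |s i - s i'| ≤ 1 / ((k:ℝ) + 1)
    rw [abs_le]
    constructor <;> linarith
end

section
/- Let (sₙ) be a sequence of nonnegative reals bounded above by B > 0, and let f : ℕ → ℕ be monotone, k, n ∈ ℕ. If s_{i+1} ≤ s_i for all i ∈ [n, max{n, (f+1)^{(⌈B(k+1)⌉)}(n)}] together with f((f+1)^{(⌈B(k+1)⌉)}(n)) (i.e. on the full range up to f(φ₂(k,n,f+1))), then there exists n' ≤ max{n, (f+1)^{(⌈B(k+1)⌉)}(n)} such that 0 ≤ s_i − s_{i+1} ≤ 1/(k+1) for all i ∈ [n', f(n')]. -/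
/-!
Write `g m = f m + 1` and `aⱼ = g^[j] n`, and suppose every block `[aⱼ, f aⱼ]` with `j < N`,
`N = ⌈B (k+1)⌉`, contains a drop `s i - s (i+1) > 1/(k+1)`. Since `s` is nonincreasing on
`[aⱼ, aⱼ₊₁]`, each such drop is at most `s aⱼ - s aⱼ₊₁`, so telescoping gives
`s n - s a_N > N/(k+1) ≥ B`, impossible for a sequence with values in `[0, B]`.
-/

open Finset

theorem nsmul_lt_sub_of_forall_lt_sub_succ {α : Type*} [AddCommGroup α] [PartialOrder α]
    [IsOrderedCancelAddMonoid α] {x : ℕ → α} {ε : α} {N : ℕ} (hN : 0 < N)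
    (h : ∀ j < N, ε < x j - x (j + 1)) : N • ε < x 0 - x N := by
  have := sum_lt_sum_of_nonempty (nonempty_range_iff.mpr hN.ne')
    (fun j hj => h j (mem_range.mp hj))
  rwa [sum_const, card_range, sum_range_sub'] at this

theorem sub_succ_le_sub_of_antitoneOn {α : Type*} [AddCommGroup α] [PartialOrder α]
    [IsOrderedAddMonoid α] {s : ℕ → α} {a b i : ℕ} (hs : AntitoneOn s (Set.Icc a (b + 1)))
    (hi : i ∈ Icc a b) : s i - s (i + 1) ≤ s a - s (b + 1) := by
  obtain ⟨hai, hib⟩ := mem_Icc.mp hi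
  apply sub_le_sub
  · exact hs ⟨le_rfl, by omega⟩ ⟨hai, by omega⟩ hai
  · exact hs ⟨by omega, by omega⟩ ⟨by omega, le_rfl⟩ (by omega)

theorem stmt17 (s : ℕ → ℝ) (B : ℝ) (hB : 0 < B)
    (hs : ∀ n, 0 ≤ s n) (hsB : ∀ n, s n ≤ B)
    (f : ℕ → ℕ) (hf : Monotone f) (k n : ℕ)
    (hdec : ∀ i ∈ Finset.Icc n
        (f (max n ((fun m => f m + 1)^[⌈B * (k + 1)⌉₊] n)) + 1),
      s (i + 1) ≤ s i) :
    ∃ n' ≤ max n ((fun m => f m + 1)^[⌈B * (k + 1)⌉₊] n),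
      ∀ i ∈ Finset.Icc n' (f n'),
        0 ≤ s i - s (i + 1) ∧ s i - s (i + 1) ≤ 1 / (k + 1) := by
  set g : ℕ → ℕ := fun m => f m + 1
  set N := ⌈B * (k + 1)⌉₊
  set M := max n (g^[N] n)
  obtain hfn | hnf := lt_or_ge (f n) n
  · exact ⟨n, le_max_left _ _, fun i hi => by grind⟩
  have hg : Monotone g := fun a b hab => Nat.succ_le_succ (hf hab)
  have hmono : Monotone fun j => g^[j] n :=
    hg.monotone_iterate_of_le_map (Nat.le_succ_of_le hnf)
  have hle_M : ∀ j ≤ N, g^[j] n ≤ M := fun j hj => le_max_of_le_right (hmono hj)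
  have hanti : AntitoneOn s (Set.Icc n (f M + 2)) :=
    antitoneOn_of_add_one_le Set.ordConnected_Icc fun i _ hi hi' =>
      hdec i (mem_Icc.mpr ⟨hi.1, by grind⟩)
  by_contra! hbad
  have hdrop : ∀ j < N, 1 / ((k : ℝ) + 1) < s (g^[j] n) - s (g^[j + 1] n) := by
    intro j hj
    obtain ⟨i, hi, hi_bad⟩ := hbad (g^[j] n) (hle_M j hj.le)
    have hfM : f (g^[j] n) ≤ f M := hf (hle_M j hj.le)
    have hn_j : n ≤ g^[j] n := hmono (Nat.zero_le j)
    rw [Function.iterate_succ_apply']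
    refine (hi_bad ?_).trans_le (sub_succ_le_sub_of_antitoneOn (hanti.mono ?_) hi)
    · exact sub_nonneg.mpr (hdec i (mem_Icc.mpr ⟨hn_j.trans (mem_Icc.mp hi).1, by grind⟩))
    · exact Set.Icc_subset_Icc hn_j (by omega)
  have hN : 0 < N := Nat.ceil_pos.mpr (by positivity)
  have hB_le : B ≤ N • (1 / ((k : ℝ) + 1)) := by
    rw [nsmul_eq_mul, mul_one_div, le_div_iff₀ (by positivity)]
    exact Nat.le_ceil _
  have htele := nsmul_lt_sub_of_forall_lt_sub_succ hN hdrop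
  simp only [Function.iterate_zero, id_eq] at htele
  linarith [hsB n, hs (g^[N] n)]
end
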